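/- Core secrecy lemma for increasing protocols: Let L be a complete lattice with top ⊤ and bottom ⊥, let ⌜·⌝ : Atoms → L be a security assignment, let K(I) be a set of atoms (the intruder's initial knowledge), and write ⌜K(I)⌝ ⊒ ⌜α⌝ to mean that some atom k ∈ K(I) satisfies ⌜k⌝ ⊒ ⌜α⌝. Let ⊢ be the Dolev–Yao deduction relation under the homomorphic equational theory. Suppose F, mapping an atom and a set of messages to L, is well-formed and full-invariant-by-intruder. Then for every set of messages M and every atom α with M ⊢ α: if F(α, M) ⊒ ⌜α⌝, then either ⌜K(I)⌝ ⊒ ⌜α⌝ or ⌜α⌝ = ⊥. -/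

import Mathlib

/-- Messages: the free term algebra generated by atoms under pairing and
encryption with atomic keys. -/
inductive Msg (A : Type) : Type
  | atom : A → Msg A
  | pair : Msg A → Msg A → Msg A
  | enc : Msg A → A → Msg A

/-- The set of atoms occurring in a message (including encryption keys). -/
def Msg.atoms {A : Type} : Msg A → Set A
  | .atom a => {a}
  | .pair m n => m.atoms ∪ n.atoms
  | .enc m k => insert k m.atoms

/-- The homomorphic equational theory `=ξ`: the smallest equivalence relation
containing every instance of `{m·m'}_k = {m}_k·{m'}_k` that is a congruence
for pairing and encryption. -/
inductive EqTh {A : Type} : Msg A → Msg A → Prop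
  | homo (m m' : Msg A) (k : A) :
      EqTh (.enc (.pair m m') k) (.pair (.enc m k) (.enc m' k))
  | refl (m : Msg A) : EqTh m m
  | symm {m m' : Msg A} : EqTh m m' → EqTh m' m
  | trans {m₁ m₂ m₃ : Msg A} : EqTh m₁ m₂ → EqTh m₂ m₃ → EqTh m₁ m₃
  | pair {m₁ m₁' m₂ m₂' : Msg A} :
      EqTh m₁ m₁' → EqTh m₂ m₂' → EqTh (.pair m₁ m₂) (.pair m₁' m₂')
  | enc {m m' : Msg A} (k : A) : EqTh m m' → EqTh (.enc m k) (.enc m' k)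

/-- Dolev–Yao deduction under the homomorphic equational theory, where
`inv` is the (involutive) inverse-key map on atoms. -/
inductive Deduce {A : Type} (inv : A → A) (M : Set (Msg A)) : Msg A → Prop
  | ax {m : Msg A} : m ∈ M → Deduce inv M m
  | pair {m m' : Msg A} :
      Deduce inv M m → Deduce inv M m' → Deduce inv M (.pair m m')
  | fst {m m' : Msg A} : Deduce inv M (.pair m m') → Deduce inv M m
  | snd {m m' : Msg A} : Deduce inv M (.pair m m') → Deduce inv M m'
  | enc {m : Msg A} (k : A) :
      Deduce inv M m → Deduce inv M (.atom k) → Deduce inv M (.enc m k)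
  | dec {m : Msg A} {k : A} :
      Deduce inv M (.enc m k) → Deduce inv M (.atom (inv k)) → Deduce inv M m
  | eq {m m' : Msg A} : Deduce inv M m → EqTh m m' → Deduce inv M m'

/-- `⌜K(I)⌝ ⊒ ⌜α⌝`: some atom in the intruder's initial knowledge has a
security level at least that of `α`. -/
def IntruderKnows {A : Type} {L : Type} [CompleteLattice L]
    (sec : A → L) (KI : Set A) (α : A) : Prop :=
  ∃ k ∈ KI, sec α ≤ sec k

/-- `F` is well-formed. -/
def WellFormed {A : Type} {L : Type} [CompleteLattice L]
    (F : A → Set (Msg A) → L) : Prop :=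
  (∀ α : A, F α {Msg.atom α} = ⊥) ∧
  (∀ (α : A) (M₁ M₂ : Set (Msg A)), F α (M₁ ∪ M₂) = F α M₁ ⊓ F α M₂) ∧
  (∀ (α : A) (M : Set (Msg A)),
      (∀ m ∈ M, α ∉ Msg.atoms m) → F α M = ⊤)

/-- `F` is full-invariant-by-intruder. -/
def FullInvariantByIntruder {A : Type} {L : Type} [CompleteLattice L]
    (inv : A → A) (sec : A → L) (KI : Set A)
    (F : A → Set (Msg A) → L) : Prop :=
  ∀ (M : Set (Msg A)) (m : Msg A), Deduce inv M m →
    ∀ α ∈ Msg.atoms m, F α M ≤ F α {m} ∨ IntruderKnows sec KI α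

theorem core_secrecy_lemma_general
    (A : Type) (L : Type) [CompleteLattice L]
    (inv : A → A)
    (sec : A → L) (KI : Set A)
    (F : A → Set (Msg A) → L)
    (hwf : WellFormed F)
    (hfi : FullInvariantByIntruder inv sec KI F)
    (M : Set (Msg A)) (α : A)
    (hded : Deduce inv M (.atom α))
    (hge : sec α ≤ F α M) :
    IntruderKnows sec KI α ∨ sec α = ⊥ := by
  rcases hfi M (.atom α) hded α rfl with hle | hknows
  · exact Or.inr (le_bot_iff.mp (hwf.1 α ▸ hge.trans hle))
  · exact Or.inl hknows

/-- Core secrecy lemma for increasing protocols: if the intruder deduces an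
atom `α` from `M` and `F(α, M) ⊒ ⌜α⌝` for a reliable `F`, then either `α` was
deliberately destined to the intruder, or `⌜α⌝ = ⊥`. -/
theorem core_secrecy_lemma
    (A : Type) [Countable A] (L : Type) [CompleteLattice L]
    (inv : A → A) (hinv : Function.Involutive inv)
    (sec : A → L) (KI : Set A)
    (F : A → Set (Msg A) → L)
    (hwf : WellFormed F)
    (hfi : FullInvariantByIntruder inv sec KI F)
    (M : Set (Msg A)) (α : A)
    (hded : Deduce inv M (.atom α))
    (hge : sec α ≤ F α M) :
    IntruderKnows sec KI α ∨ sec α = ⊥ :=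
  core_secrecy_lemma_general A L inv sec KI F hwf hfi M α hded hge
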